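/- For every 1 ≤ n ≤ N, the DOC kernels satisfy ∑_{j=1}^n d_{n−j}^{(n)} = τ_n, and consequently ∑_{k=1}^n ∑_{j=1}^k d_{k−j}^{(k)} = t_n, where t_n = τ_1 + ⋯ + τ_n. -/

import Mathlib

open Finset

/-- Adjacent time-step ratios `r_k = τ_k / τ_{k-1}`. -/
noncomputable def rr (τ : ℕ → ℝ) (k : ℕ) : ℝ := τ k / τ (k - 1)

/-- The WSBDF2 convolution kernels `b_j^{(n)}`:
`b_0^{(1)} = 1/τ_1`, and for `n ≥ 2`,
`b_0^{(n)} = (1 + 2θ r_n)/(τ_n (1 + r_n))`, `b_1^{(n)} = (1 - 2θ) r_n² /(τ_n (1 + r_n))`,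
all other kernels vanish. -/
noncomputable def bk (θ : ℝ) (τ : ℕ → ℝ) (n j : ℕ) : ℝ :=
  if n = 1 then (if j = 0 then 1 / τ 1 else 0)
  else if j = 0 then (1 + 2 * θ * rr τ n) / (τ n * (1 + rr τ n))
  else if j = 1 then (1 - 2 * θ) * (rr τ n) ^ 2 / (τ n * (1 + rr τ n))
  else 0

/-- The DOC (discrete orthogonal convolution) kernels: `dk θ τ n m` is `d_m^{(n)}`,
defined by `d_0^{(n)} = 1/b_0^{(n)}` and
`d_{n-k}^{(n)} = -(b_1^{(k+1)}/b_0^{(k)}) d_{n-k-1}^{(n)}` for `1 ≤ k ≤ n-1`. -/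
noncomputable def dk (θ : ℝ) (τ : ℕ → ℝ) (n : ℕ) : ℕ → ℝ
  | 0 => 1 / bk θ τ n 0
  | m + 1 => -(bk θ τ (n - m) 1 / bk θ τ (n - m - 1) 0) * dk θ τ n m

/- The DOC kernels are the inverse of the lower-bidiagonal matrix of WSBDF2 kernels, and WSBDF2
is exact on linear functions: `b_0^{(k)} τ_k + b_1^{(k)} τ_{k-1} = 1`. Writing
`f_m = d_m^{(n)} b_0^{(n-m)} τ_{n-m}`, exactness and the orthogonality relation
`d_{m+1}^{(n)} b_0^{(n-m-1)} = -b_1^{(n-m)} d_m^{(n)}` give `d_m^{(n)} = f_m - f_{m+1}`, so the row sum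
of the DOC kernels telescopes to `f_0 = τ_n`. -/

theorem Finset.sum_range_succ_eq_of_eq_sub {M : Type*} [AddCommGroup M] (e f : ℕ → M) (n : ℕ)
    (h : ∀ m < n, e m = f m - f (m + 1)) (hlast : e n = f n) :
    ∑ m ∈ range (n + 1), e m = f 0 := by
  rw [sum_range_succ, sum_congr rfl fun m hm => h m (mem_range.1 hm), sum_range_sub', hlast,
    sub_add_cancel]

theorem Finset.sum_Icc_one_sub_eq_sum_range {M : Type*} [AddCommMonoid M] (g : ℕ → M) (n : ℕ) :
    ∑ j ∈ Icc 1 n, g (n - j) = ∑ m ∈ range n, g m := by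
  rw [← sum_range_reflect, ← Ico_add_one_right_eq_Icc, sum_Ico_eq_sum_range, Nat.add_sub_cancel]
  exact sum_congr rfl fun m _ => by rw [Nat.sub_sub, add_comm]

section Kernels

variable {θ : ℝ} {τ : ℕ → ℝ}

theorem bk_one_zero : bk θ τ 1 0 = 1 / τ 1 := by
  simp [bk]

theorem bk_zero_pos {k : ℕ} (hθ : 0 ≤ θ) (hk : 2 ≤ k) (hτk : 0 < τ k) (hτk' : 0 < τ (k - 1)) :
    0 < bk θ τ k 0 := by
  have hr : 0 < rr τ k := div_pos hτk hτk'
  simp only [bk, if_neg (by omega : k ≠ 1), ↓reduceIte]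
  positivity

theorem bk_zero_mul_add_bk_one_mul {k : ℕ} (hk : 2 ≤ k) (hτk : 0 < τ k) (hτk' : 0 < τ (k - 1)) :
    bk θ τ k 0 * τ k + bk θ τ k 1 * τ (k - 1) = 1 := by
  have hr : 0 < 1 + τ k / τ (k - 1) := by positivity
  simp only [bk, rr, if_neg (by omega : k ≠ 1), ↓reduceIte, one_ne_zero]
  field_simp
  ring

theorem dk_zero_mul_bk_zero {n : ℕ} (h : bk θ τ n 0 ≠ 0) : dk θ τ n 0 * bk θ τ n 0 = 1 := by
  rw [dk, one_div_mul_cancel h]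

theorem dk_succ_mul_bk_zero {n m : ℕ} (h : bk θ τ (n - m - 1) 0 ≠ 0) :
    dk θ τ n (m + 1) * bk θ τ (n - m - 1) 0 = -(bk θ τ (n - m) 1 * dk θ τ n m) := by
  rw [dk]
  field_simp

theorem sum_range_dk {n : ℕ} (hθ : 0 ≤ θ) (hn : 1 ≤ n) (hτ : ∀ k, 1 ≤ k → k ≤ n → 0 < τ k) :
    ∑ m ∈ range n, dk θ τ n m = τ n := by
  obtain ⟨p, rfl⟩ : ∃ p, n = p + 1 := ⟨n - 1, by omega⟩
  have hb0 : ∀ k, 1 ≤ k → k ≤ p + 1 → bk θ τ k 0 ≠ 0 := by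
    intro k hk1 hk
    rcases hk1.eq_or_lt with rfl | hk2
    · simpa [bk_one_zero] using (hτ 1 le_rfl hk).ne'
    · exact (bk_zero_pos hθ hk2 (hτ k (by omega) hk) (hτ (k - 1) (by omega) (by omega))).ne'
  let f m := dk θ τ (p + 1) m * bk θ τ (p + 1 - m) 0 * τ (p + 1 - m)
  have step : ∀ m < p, dk θ τ (p + 1) m = f m - f (m + 1) := by
    intro m hm
    have consistency := bk_zero_mul_add_bk_one_mul (θ := θ) (k := p + 1 - m) (by omega)
      (hτ _ (by omega) (by omega)) (hτ _ (by omega) (by omega))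
    have orth := dk_succ_mul_bk_zero (hb0 (p + 1 - m - 1) (by omega) (by omega))
    rw [show p + 1 - m - 1 = p + 1 - (m + 1) by omega] at consistency orth
    linear_combination (-dk θ τ (p + 1) m) * consistency + τ (p + 1 - (m + 1)) * orth
  have last : dk θ τ (p + 1) p = f p := by
    simp only [f, show p + 1 - p = 1 by omega, bk_one_zero]
    field_simp [(hτ 1 le_rfl (by omega)).ne']
  rw [sum_range_succ_eq_of_eq_sub _ f p step last]
  simp only [f, Nat.sub_zero, dk_zero_mul_bk_zero (hb0 (p + 1) hn le_rfl), one_mul]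

end Kernels

theorem doc_kernels_row_sum_general
    (θ : ℝ) (hθ : 1 / 2 ≤ θ ∧ θ ≤ 1)
    (N : ℕ)
    (τ : ℕ → ℝ) (hτ : ∀ k, 1 ≤ k → k ≤ N → 0 < τ k) :
    ∀ n, 1 ≤ n → n ≤ N →
      (∑ j ∈ Finset.Icc 1 n, dk θ τ n (n - j) = τ n) ∧
      (∑ k ∈ Finset.Icc 1 n, ∑ j ∈ Finset.Icc 1 k, dk θ τ k (k - j) =
        ∑ k ∈ Finset.Icc 1 n, τ k) := by
  have row : ∀ k, 1 ≤ k → k ≤ N → ∑ j ∈ Icc 1 k, dk θ τ k (k - j) = τ k := fun k hk hkN => by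
    rw [sum_Icc_one_sub_eq_sum_range]
    exact sum_range_dk (by linarith [hθ.1]) hk fun i hi hik => hτ i hi (hik.trans hkN)
  intro n hn hnN
  exact ⟨row n hn hnN, sum_congr rfl fun k hk => row k (mem_Icc.1 hk).1 ((mem_Icc.1 hk).2.trans hnN)⟩

/-- For every `1 ≤ n ≤ N`, the DOC kernels satisfy
`∑_{j=1}^n d_{n−j}^{(n)} = τ_n`, and consequently
`∑_{k=1}^n ∑_{j=1}^k d_{k−j}^{(k)} = t_n = τ_1 + ⋯ + τ_n`. -/
theorem doc_kernels_row_sum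
    (θ : ℝ) (hθ : 1 / 2 ≤ θ ∧ θ ≤ 1)
    (N : ℕ) (hN : 1 ≤ N)
    (τ : ℕ → ℝ) (hτ : ∀ k, 1 ≤ k → k ≤ N → 0 < τ k) :
    ∀ n, 1 ≤ n → n ≤ N →
      (∑ j ∈ Finset.Icc 1 n, dk θ τ n (n - j) = τ n) ∧
      (∑ k ∈ Finset.Icc 1 n, ∑ j ∈ Finset.Icc 1 k, dk θ τ k (k - j) =
        ∑ k ∈ Finset.Icc 1 n, τ k) :=
  doc_kernels_row_sum_general θ hθ N τ hτ
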